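/- arXiv:2212.14070 — 2 statements merged into one kernel-verified Lean document; each statement's English description precedes it below -/
import Mathlib

section
/- For all real numbers a, b and every exponent p with 1 < p ≤ 2, there exists a constant α > 0 depending only on p such that (|a|^{p-2}a - |b|^{p-2}b)(a - b) ≥ α |a-b|^2 (|a|+|b|)^{p-2}, where the right-hand side is interpreted as 0 when a = b = 0. -/
/-!
Write `φ(x) = |x|^{p-2} x`. The map `φ` is odd and multiplicative, and both sides of the inequality
are invariant under swapping `a, b` and under `(a, b) ↦ (-a, -b)`, so we may assume `|b| ≤ a`.
Putting `b = a t` with `t ∈ [-1, 1]` reduces the claim to the one-variable bound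
`(p - 1)(1 - t) ≤ 1 - φ(t)`, which for `t ≥ 0` is Bernoulli's inequality `t^{p-1} ≤ 1 + (p-1)(t-1)`
and for `t < 0` follows from `(-t)^{p-1} ≥ -t`. Finally `(|a| + |b|)^{p-2} ≤ a^{p-2}` as `p ≤ 2`.
-/

open Real

/-- The signed power `x ↦ |x|^{p-2} x`, the derivative of `x ↦ |x|^p / p`. -/
noncomputable def signedPow (p x : ℝ) : ℝ := |x| ^ (p - 2) * x

section

variable {p : ℝ}

theorem signedPow_neg (x : ℝ) : signedPow p (-x) = -signedPow p x := by
  simp [signedPow]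

theorem signedPow_mul (x y : ℝ) : signedPow p (x * y) = signedPow p x * signedPow p y := by
  simp only [signedPow, abs_mul, mul_rpow (abs_nonneg x) (abs_nonneg y)]
  ring

theorem signedPow_of_nonneg (hp : p ≠ 1) {x : ℝ} (hx : 0 ≤ x) : signedPow p x = x ^ (p - 1) := by
  rw [signedPow, abs_of_nonneg hx, ← rpow_add_one' hx (by contrapose! hp; linarith)]
  ring_nf

theorem mul_one_sub_le_one_sub_signedPow (hp1 : 1 < p) (hp2 : p ≤ 2) {t : ℝ}
    (ht1 : -1 ≤ t) (ht2 : t ≤ 1) : (p - 1) * (1 - t) ≤ 1 - signedPow p t := by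
  rcases le_or_gt 0 t with ht | ht
  · have bernoulli := rpow_one_add_le_one_add_mul_self (s := t - 1) (by linarith)
      (p := p - 1) (by linarith) (by linarith)
    rw [add_sub_cancel] at bernoulli
    rw [signedPow_of_nonneg hp1.ne' ht]
    linarith
  · have h : -t ≤ (-t) ^ (p - 1) := self_le_rpow_of_le_one (by linarith) (by linarith) (by linarith)
    rw [← neg_neg t, signedPow_neg, signedPow_of_nonneg hp1.ne' (by linarith)]
    nlinarith

theorem mul_sq_mul_rpow_le_of_abs_le (hp1 : 1 < p) (hp2 : p ≤ 2) {a b : ℝ} (hba : |b| ≤ a) :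
    (p - 1) * (a - b) ^ 2 * (|a| + |b|) ^ (p - 2) ≤
      (signedPow p a - signedPow p b) * (a - b) := by
  rcases (abs_nonneg b).trans hba |>.eq_or_lt with ha | ha
  · obtain rfl : b = 0 := abs_nonpos_iff.mp (ha ▸ hba)
    simp [← ha]
  set t := b / a
  have hb : b = a * t := (mul_div_cancel₀ b ha.ne').symm
  have ht : |t| ≤ 1 := by rw [abs_div, abs_of_pos ha, div_le_one ha]; exact hba
  have hφa : signedPow p a * a = a ^ (p - 2) * a ^ 2 := by
    rw [signedPow, abs_of_pos ha]; ring
  have hbound := mul_one_sub_le_one_sub_signedPow hp1 hp2 (abs_le.mp ht).1 (abs_le.mp ht).2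
  have hrpow : (|a| + |b|) ^ (p - 2) ≤ a ^ (p - 2) :=
    rpow_le_rpow_of_nonpos ha (by rw [abs_of_pos ha]; linarith [abs_nonneg b]) (by linarith)
  calc (p - 1) * (a - b) ^ 2 * (|a| + |b|) ^ (p - 2)
      ≤ (p - 1) * (a - b) ^ 2 * a ^ (p - 2) := by gcongr
    _ = a ^ (p - 2) * a ^ 2 * ((p - 1) * (1 - t) * (1 - t)) := by rw [hb]; ring
    _ ≤ a ^ (p - 2) * a ^ 2 * ((1 - signedPow p t) * (1 - t)) := by
        gcongr
        linarith [(abs_le.mp ht).2]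
    _ = (signedPow p a - signedPow p b) * (a - b) := by
        rw [← hφa, hb, signedPow_mul]; ring

theorem mul_sq_mul_rpow_le (hp1 : 1 < p) (hp2 : p ≤ 2) (a b : ℝ) :
    (p - 1) * (a - b) ^ 2 * (|a| + |b|) ^ (p - 2) ≤
      (signedPow p a - signedPow p b) * (a - b) := by
  wlog hba : |b| ≤ |a| generalizing a b
  · have := this b a (le_of_not_ge hba)
    rw [add_comm] at this
    linarith
  rcases le_or_gt 0 a with ha | ha
  · exact mul_sq_mul_rpow_le_of_abs_le hp1 hp2 (by rwa [abs_of_nonneg ha] at hba)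
  · have := mul_sq_mul_rpow_le_of_abs_le hp1 hp2 (a := -a) (b := -b)
      (by rwa [abs_neg, ← abs_of_neg ha])
    simp only [abs_neg, signedPow_neg] at this
    linarith

end

theorem signed_power_monotonicity_p_le_two (p : ℝ) (hp1 : 1 < p) (hp2 : p ≤ 2) :
    ∃ α : ℝ, 0 < α ∧ ∀ a b : ℝ,
      (|a| ^ (p - 2) * a - |b| ^ (p - 2) * b) * (a - b) ≥
        α * |a - b| ^ 2 * (|a| + |b|) ^ (p - 2) := by
  refine ⟨p - 1, sub_pos.mpr hp1, fun a b => ?_⟩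
  rw [ge_iff_le, sq_abs]
  exact mul_sq_mul_rpow_le hp1 hp2 a b
end

section
/- Let v : ℝ → ℝ be defined by v(x) = max(x,0)^{1/2}, and for h ∈ (0, 1/4) consider the first-difference integral I(h) = ∫_h^{1-h} ((x+h)^{1/2} − x^{1/2})^2 dx. Then there exist constants c, C > 0 independent of h such that c h^2 |log h| ≤ I(h) ≤ C h^2 |log h|. -/
open Real MeasureTheory

set_option maxHeartbeats 1000000 in
theorem first_difference_sqrt_log_bounds :
    ∃ c C : ℝ, 0 < c ∧ 0 < C ∧
      ∀ h : ℝ, 0 < h → h < 1 / 4 →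
        c * h ^ 2 * |Real.log h| ≤
          (∫ x in Set.Ioo h (1 - h), (Real.sqrt (x + h) - Real.sqrt x) ^ 2) ∧
        (∫ x in Set.Ioo h (1 - h), (Real.sqrt (x + h) - Real.sqrt x) ^ 2) ≤
          C * h ^ 2 * |Real.log h| := by
  refine ⟨1/16, 1/4, by norm_num, by norm_num, fun h h0 h4 => ?_⟩
  have h1 : h ≤ 1 - h := by linarith
  have hIoo : (∫ x in Set.Ioo h (1 - h), (Real.sqrt (x + h) - Real.sqrt x) ^ 2)
      = ∫ x in h..(1-h), (Real.sqrt (x + h) - Real.sqrt x) ^ 2 := by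
    rw [intervalIntegral.integral_of_le h1, integral_Ioc_eq_integral_Ioo]
  rw [hIoo]
  have hlog : |Real.log h| = -Real.log h := abs_of_neg (Real.log_neg h0 (by linarith))
  -- pointwise bounds
  have hbound : ∀ x ∈ Set.Icc h (1 - h),
      h^2/8 * x⁻¹ ≤ (Real.sqrt (x + h) - Real.sqrt x) ^ 2 ∧
      (Real.sqrt (x + h) - Real.sqrt x) ^ 2 ≤ h^2/4 * x⁻¹ := by
    intro x hx
    obtain ⟨hxl, hxr⟩ := hx
    have hx0 : 0 < x := lt_of_lt_of_le h0 hxl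
    set a := Real.sqrt (x + h) with ha
    set b := Real.sqrt x with hb
    have hb0 : 0 < b := Real.sqrt_pos.mpr hx0
    have ha0 : 0 < a := Real.sqrt_pos.mpr (by linarith)
    have hab : b ≤ a := Real.sqrt_le_sqrt (by linarith)
    have ha2 : a^2 = x + h := Real.sq_sqrt (by linarith)
    have hb2 : b^2 = x := Real.sq_sqrt hx0.le
    have hdiff : (a - b) * (a + b) = h := by nlinarith
    have hsum : 0 < a + b := by linarith
    have key : (a - b)^2 = h^2 / (a+b)^2 := by
      field_simp
      nlinarith
    have hub : (a+b)^2 ≤ 8 * x := by nlinarith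
    have hlb : 4 * x ≤ (a+b)^2 := by nlinarith
    constructor
    · rw [key]
      have : h^2/8 * x⁻¹ = h^2 / (8*x) := by field_simp
      rw [this, div_le_div_iff₀ (by positivity) (by positivity)]
      nlinarith
    · rw [key]
      have : h^2/4 * x⁻¹ = h^2 / (4*x) := by field_simp
      rw [this, div_le_div_iff₀ (by positivity) (by positivity)]
      nlinarith
  -- integrability
  have hne : ∀ x : ℝ, x ∈ Set.uIcc h (1-h) → x ≠ 0 := by
    intro x hx
    rw [Set.uIcc_of_le h1] at hx
    have := hx.1; intro hx0; rw [hx0] at this; linarith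
  have hint_inv : IntervalIntegrable (fun x : ℝ => x⁻¹) volume h (1-h) :=
    intervalIntegral.intervalIntegrable_inv hne continuousOn_id
  have hint1 : IntervalIntegrable (fun x : ℝ => h^2/8 * x⁻¹) volume h (1-h) :=
    hint_inv.const_mul _
  have hint2 : IntervalIntegrable (fun x : ℝ => h^2/4 * x⁻¹) volume h (1-h) :=
    hint_inv.const_mul _
  have hintf : IntervalIntegrable (fun x : ℝ => (Real.sqrt (x + h) - Real.sqrt x) ^ 2)
      volume h (1-h) := by
    exact ((Real.continuous_sqrt.comp (continuous_id.add continuous_const)).sub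
      Real.continuous_sqrt).pow 2 |>.intervalIntegrable _ _
  have hIinv : ∫ x in h..(1-h), x⁻¹ = Real.log (1-h) - Real.log h := by
    rw [integral_inv_of_pos h0 (by linarith), Real.log_div (by linarith) (ne_of_gt h0)]
  have hloglb : Real.log h ≤ 2 * Real.log (1-h) := by
    have h2 : Real.log h ≤ Real.log ((1-h)^2) := by
      apply Real.log_le_log h0
      nlinarith
    rwa [Real.log_pow] at h2
    
  have hlogub : Real.log (1 - h) ≤ 0 := Real.log_nonpos (by linarith) (by linarith)
  constructor
  · have := intervalIntegral.integral_mono_on h1 hint1 hintf (fun x hx => (hbound x hx).1)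
    have heq : ∫ x in h..(1-h), h^2/8 * x⁻¹ = h^2/8 * (Real.log (1-h) - Real.log h) := by
      rw [intervalIntegral.integral_const_mul, hIinv]
    rw [heq] at this
    refine le_trans ?_ this
    rw [hlog]
    have h2 := mul_nonneg (sq_nonneg h) (by linarith : (0:ℝ) ≤ 2 * Real.log (1-h) - Real.log h)
    nlinarith [h2]
  · have := intervalIntegral.integral_mono_on h1 hintf hint2 (fun x hx => (hbound x hx).2)
    have heq : ∫ x in h..(1-h), h^2/4 * x⁻¹ = h^2/4 * (Real.log (1-h) - Real.log h) := by
      rw [intervalIntegral.integral_const_mul, hIinv]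
    rw [heq] at this
    refine le_trans this ?_
    rw [hlog]
    have h2 := mul_nonneg (sq_nonneg h) (by linarith : (0:ℝ) ≤ -Real.log (1-h))
    nlinarith [h2]
end
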